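/- Let χ : [n] → {•, ∘} with χ(1) = χ(n) = ∘ and χ^{-1}(∘) = {1 = l0 < l1 < ... < lm = n}, m ≥ 2. The map α'_1 sending π ∈ INC(χ) to the pair (π|_{[1,l1]}, π|_{[l1,n]}) of its restrictions is an order isomorphism from INC(χ) (with the reversed refinement order) onto NC([1,l1]) × INC(χ'), where χ' is the restriction of χ to [l1,n] and the product carries the componentwise order. -/

import Mathlib

open scoped Classical

section Defs

variable {α : Type*}

/-- `P` is a partition of the finite set `S`: blocks are nonempty subsets of `S`
and every element of `S` lies in a unique block. -/
def IsPartitionOn (S : Finset α) (P : Finset (Finset α)) : Prop :=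
  (∀ B ∈ P, B.Nonempty ∧ B ⊆ S) ∧ ∀ x ∈ S, ∃! B, B ∈ P ∧ x ∈ B

/-- `P` is noncrossing: no `s₁ < r₁ < s₂ < r₂` with `s₁, s₂` in one block and
`r₁, r₂` in a different block. -/
def Noncrossing [LinearOrder α] (P : Finset (Finset α)) : Prop :=
  ∀ V ∈ P, ∀ W ∈ P, V ≠ W →
    ¬ ∃ s₁ r₁ s₂ r₂, s₁ ∈ V ∧ s₂ ∈ V ∧ r₁ ∈ W ∧ r₂ ∈ W ∧ s₁ < r₁ ∧ r₁ < s₂ ∧ s₂ < r₂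

/-- A block `V` is inner if some other block `W` has elements `s, t` with
`s < v < t` for all `v ∈ V`. -/
def IsInnerBlock [LinearOrder α] (P : Finset (Finset α)) (V : Finset α) : Prop :=
  ∃ W ∈ P, W ≠ V ∧ ∃ s ∈ W, ∃ t ∈ W, ∀ v ∈ V, s < v ∧ v < t

/-- `P` is an interval partition: no `s₁ < r < s₂` with `s₁, s₂` in one block
and `r` in a different block. -/
def IsIntervalPartition [LinearOrder α] (P : Finset (Finset α)) : Prop :=
  ∀ V ∈ P, ∀ W ∈ P, V ≠ W →
    ¬ ∃ s₁ r s₂, s₁ ∈ V ∧ s₂ ∈ V ∧ r ∈ W ∧ s₁ < r ∧ r < s₂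

/-- Reversed refinement order: every block of `P` is contained in a block of `Q`. -/
def Refines (P Q : Finset (Finset α)) : Prop := ∀ B ∈ P, ∃ C ∈ Q, B ⊆ C

/-- Noncrossing partition of the finite ordered set `S`. -/
def NCOn [LinearOrder α] (S : Finset α) (P : Finset (Finset α)) : Prop :=
  IsPartitionOn S P ∧ Noncrossing P

/-- Interval-noncrossing partition of `S` w.r.t. the coloring `χ`
(`χ k = true` means `k` is colored `∘`): a noncrossing partition such that
no `∘`-colored element lies in an inner block. -/
def INCOn [LinearOrder α] (S : Finset α) (χ : α → Bool) (P : Finset (Finset α)) : Prop :=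
  IsPartitionOn S P ∧ Noncrossing P ∧
    ∀ V ∈ P, IsInnerBlock P V → ∀ k ∈ V, χ k = false

/-- Restriction of a partition to a subset: nonempty intersections of blocks with `A`. -/
def restrictPart [DecidableEq α] (P : Finset (Finset α)) (A : Finset α) : Finset (Finset α) :=
  (P.image (· ∩ A)).filter (·.Nonempty)

end Defs

/-!
Since `l₁` is `∘`, no block of `π ∈ INC(χ)` other than the block of `l₁` has points on both sides
of `l₁`: otherwise the block of `l₁` would be inner. So every block of `π` lies on one side of `l₁`
or is the union of its two restrictions, and `π` is recovered from `(π|[1,l₁], π|[l₁,n])` by merging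
the two blocks through `l₁`. This gluing works for every pair in `NC([1,l₁]) × INC(χ')`: a crossing
of the glued partition shows up in one of the two restrictions, and a block left of `l₁` can only
be inner if it avoids `1`, in which case all its points are `•`. The same description of the
blocks shows that refinement is tested on the two restrictions.
-/

open Finset

section Partitions

variable {α : Type*} {S A : Finset α} {P Q : Finset (Finset α)} {B V : Finset α}

lemma IsPartitionOn.eq_of_mem (hP : IsPartitionOn S P) {C : Finset α} (hB : B ∈ P) (hC : C ∈ P)
    {x : α} (hxB : x ∈ B) (hxC : x ∈ C) : B = C := by
  obtain ⟨D, -, huniq⟩ := hP.2 x ((hP.1 B hB).2 hxB)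
  rw [huniq B ⟨hB, hxB⟩, huniq C ⟨hC, hxC⟩]

lemma refines_refl (P : Finset (Finset α)) : Refines P P :=
  fun B hB => ⟨B, hB, subset_rfl⟩

lemma IsPartitionOn.subset_of_refines (hP : IsPartitionOn S P) (hPQ : Refines P Q)
    (hQP : Refines Q P) : P ⊆ Q := by
  intro B hB
  obtain ⟨C, hC, hBC⟩ := hPQ B hB
  obtain ⟨D, hD, hCD⟩ := hQP C hC
  obtain ⟨x, hx⟩ := (hP.1 B hB).1
  rw [← hP.eq_of_mem hB hD hx (hCD (hBC hx))] at hCD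
  rwa [hBC.antisymm hCD]

lemma IsPartitionOn.eq_of_refines {T : Finset α} (hP : IsPartitionOn S P)
    (hQ : IsPartitionOn T Q) (hPQ : Refines P Q) (hQP : Refines Q P) : P = Q :=
  (hP.subset_of_refines hPQ hQP).antisymm (hQ.subset_of_refines hQP hPQ)

variable [DecidableEq α]

lemma mem_restrictPart : V ∈ restrictPart P A ↔ (∃ B ∈ P, B ∩ A = V) ∧ V.Nonempty := by
  simp [restrictPart]

lemma inter_mem_restrictPart (hB : B ∈ P) (hne : (B ∩ A).Nonempty) :
    B ∩ A ∈ restrictPart P A :=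
  mem_restrictPart.2 ⟨⟨B, hB, rfl⟩, hne⟩

lemma IsPartitionOn.restrictPart (hP : IsPartitionOn S P) (hA : A ⊆ S) :
    IsPartitionOn A (restrictPart P A) := by
  refine ⟨fun V hV => ?_, fun x hx => ?_⟩
  · obtain ⟨⟨B, -, rfl⟩, hne⟩ := mem_restrictPart.1 hV
    exact ⟨hne, inter_subset_right⟩
  · obtain ⟨B, ⟨hB, hxB⟩, -⟩ := hP.2 x (hA hx)
    have hxBA : x ∈ B ∩ A := mem_inter.2 ⟨hxB, hx⟩
    refine ⟨B ∩ A, ⟨inter_mem_restrictPart hB ⟨x, hxBA⟩, hxBA⟩, ?_⟩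
    rintro W ⟨hW, hxW⟩
    obtain ⟨⟨C, hC, rfl⟩, -⟩ := mem_restrictPart.1 hW
    rw [hP.eq_of_mem hC hB (mem_inter.1 hxW).1 hxB]

lemma Refines.restrictPart (h : Refines P Q) (A : Finset α) :
    Refines (restrictPart P A) (restrictPart Q A) := by
  intro V hV
  obtain ⟨⟨B, hB, rfl⟩, hne⟩ := mem_restrictPart.1 hV
  obtain ⟨C, hC, hBC⟩ := h B hB
  have hsub : B ∩ A ⊆ C ∩ A := inter_subset_inter_right hBC
  exact ⟨C ∩ A, inter_mem_restrictPart hC (hne.mono hsub), hsub⟩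

lemma exists_superset_of_refines_restrictPart
    (h : Refines (restrictPart P A) (restrictPart Q A)) (hB : B ∈ P) (hne : (B ∩ A).Nonempty) :
    ∃ C ∈ Q, B ∩ A ⊆ C := by
  obtain ⟨C', hC', hsub⟩ := h _ (inter_mem_restrictPart hB hne)
  obtain ⟨⟨C, hC, rfl⟩, -⟩ := mem_restrictPart.1 hC'
  exact ⟨C, hC, hsub.trans inter_subset_left⟩

lemma IsPartitionOn.inter_ne_inter (hP : IsPartitionOn S P) {W : Finset α} (hV : V ∈ P)
    (hW : W ∈ P) (hVW : V ≠ W) {x : α} (hx : x ∈ V ∩ A) : V ∩ A ≠ W ∩ A := by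
  intro h
  have hxW : x ∈ W ∩ A := h ▸ hx
  exact hVW (hP.eq_of_mem hV hW (mem_inter.1 hx).1 (mem_inter.1 hxW).1)

variable [LinearOrder α]

lemma Noncrossing.restrictPart (h : Noncrossing P) (A : Finset α) :
    Noncrossing (restrictPart P A) := by
  rintro V hV W hW hVW ⟨s₁, r₁, s₂, r₂, hs₁, hs₂, hr₁, hr₂, h₁, h₂, h₃⟩
  obtain ⟨⟨B, hB, rfl⟩, -⟩ := mem_restrictPart.1 hV
  obtain ⟨⟨C, hC, rfl⟩, -⟩ := mem_restrictPart.1 hW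
  exact h B hB C hC (by rintro rfl; exact hVW rfl) ⟨s₁, r₁, s₂, r₂, (mem_inter.1 hs₁).1,
    (mem_inter.1 hs₂).1, (mem_inter.1 hr₁).1, (mem_inter.1 hr₂).1, h₁, h₂, h₃⟩

lemma NCOn.restrictPart (h : NCOn S P) (hA : A ⊆ S) : NCOn A (restrictPart P A) :=
  ⟨h.1.restrictPart hA, h.2.restrictPart A⟩

lemma IsInnerBlock.of_restrictPart (h : IsInnerBlock (restrictPart P A) V) (hV : V ⊆ A) :
    IsInnerBlock P V := by
  obtain ⟨W', hW', hWV, s, hs, t, ht, hst⟩ := h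
  obtain ⟨⟨W, hW, rfl⟩, -⟩ := mem_restrictPart.1 hW'
  refine ⟨W, hW, ?_, s, (mem_inter.1 hs).1, t, (mem_inter.1 ht).1, hst⟩
  rintro rfl
  exact hWV (inter_eq_left.2 hV)

end Partitions

section CutPoint

variable {α : Type*} [LinearOrder α] {S : Finset α} {χ : α → Bool} {l : α}
  {P Q : Finset (Finset α)} {B : Finset α}

def NoBlockStraddles (l : α) (P : Finset (Finset α)) : Prop :=
  ∀ B ∈ P, ∀ x ∈ B, ∀ y ∈ B, x < l → l < y → l ∈ B

lemma INCOn.noBlockStraddles (hP : INCOn S χ P) (hlS : l ∈ S) (hl : χ l = true) :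
    NoBlockStraddles l P := by
  intro B hB x hxB y hyB hxl hly
  by_contra hlB
  obtain ⟨V, ⟨hV, hlV⟩, -⟩ := hP.1.2 l hlS
  have hVB : V ≠ B := by rintro rfl; exact hlB hlV
  have hinner : IsInnerBlock P V := by
    refine ⟨B, hB, hVB.symm, x, hxB, y, hyB, fun v hvV => ⟨?_, ?_⟩⟩
    · by_contra! hvx
      have hvx : v < x := hvx.lt_of_ne (by rintro rfl; exact hVB (hP.1.eq_of_mem hV hB hvV hxB))
      exact hP.2.1 V hV B hB hVB ⟨v, x, l, y, hvV, hlV, hxB, hyB, hvx, hxl, hly⟩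
    · by_contra! hyv
      have hyv : y < v := hyv.lt_of_ne' (by rintro rfl; exact hVB (hP.1.eq_of_mem hV hB hvV hyB))
      exact hP.2.1 B hB V hV hVB.symm ⟨x, l, y, v, hxB, hyB, hlV, hvV, hxl, hly, hyv⟩
  simp [hP.2.2 V hV hinner l hlV] at hl

variable [LocallyFiniteOrderBot α] [LocallyFiniteOrderTop α]

lemma NoBlockStraddles.subset_Iic_or_subset_Ici (h : NoBlockStraddles l P) (hB : B ∈ P)
    (hl : l ∉ B) : B ⊆ Iic l ∨ B ⊆ Ici l := by
  by_contra! hside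
  obtain ⟨y, hyB, hy⟩ := not_subset.1 hside.1
  obtain ⟨x, hxB, hx⟩ := not_subset.1 hside.2
  rw [mem_Iic, not_le] at hy
  rw [mem_Ici, not_le] at hx
  exact hl (h B hB x hxB y hyB hx hy)

variable [DecidableEq α]

/-- A crossing of `P` that does not lie on one side of `l` has `l` in one of its two blocks,
and `l` then replaces a crossing point to give a crossing on one side. -/
lemma noncrossing_of_restrictPart_Iic_Ici (hP : IsPartitionOn S P) (hs : NoBlockStraddles l P)
    (h₁ : Noncrossing (restrictPart P (Iic l))) (h₂ : Noncrossing (restrictPart P (Ici l))) :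
    Noncrossing P := by
  rintro V hV W hW hVW ⟨s₁, r₁, s₂, r₂, hs₁, hs₂, hr₁, hr₂, h12, h23, h34⟩
  have left : ∀ {a b c d : α}, a ∈ V → c ∈ V → b ∈ W → d ∈ W → a < b → b < c → c < d →
      d ≤ l → False := by
    intro a b c d ha hc hb hd hab hbc hcd hdl
    have mem : ∀ {x U}, x ∈ U → x ≤ l → x ∈ U ∩ Iic l := fun hx hxl =>
      mem_inter.2 ⟨hx, mem_Iic.2 hxl⟩
    exact h₁ _ (inter_mem_restrictPart hV ⟨a, mem ha (by order)⟩)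
      _ (inter_mem_restrictPart hW ⟨b, mem hb (by order)⟩)
      (hP.inter_ne_inter hV hW hVW (mem ha (by order)))
      ⟨a, b, c, d, mem ha (by order), mem hc (by order), mem hb (by order), mem hd hdl,
        hab, hbc, hcd⟩
  have right : ∀ {a b c d : α}, a ∈ V → c ∈ V → b ∈ W → d ∈ W → a < b → b < c → c < d →
      l ≤ a → False := by
    intro a b c d ha hc hb hd hab hbc hcd hla
    have mem : ∀ {x U}, x ∈ U → l ≤ x → x ∈ U ∩ Ici l := fun hx hlx =>
      mem_inter.2 ⟨hx, mem_Ici.2 hlx⟩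
    exact h₂ _ (inter_mem_restrictPart hV ⟨a, mem ha hla⟩)
      _ (inter_mem_restrictPart hW ⟨b, mem hb (by order)⟩)
      (hP.inter_ne_inter hV hW hVW (mem ha hla))
      ⟨a, b, c, d, mem ha hla, mem hc (by order), mem hb (by order), mem hd (by order),
        hab, hbc, hcd⟩
  have not_both : l ∈ V → l ∈ W → False := fun hlV hlW => hVW (hP.eq_of_mem hV hW hlV hlW)
  rcases le_or_gt r₂ l with hr₂l | hlr₂
  · exact left hs₁ hs₂ hr₁ hr₂ h12 h23 h34 hr₂l
  rcases le_or_gt l s₁ with hls₁ | hs₁l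
  · exact right hs₁ hs₂ hr₁ hr₂ h12 h23 h34 hls₁
  rcases le_or_gt l r₁ with hlr₁ | hr₁l
  · have hlV := hs V hV s₁ hs₁ s₂ hs₂ hs₁l (by order)
    have hlr₁ : l < r₁ := hlr₁.lt_of_ne (by rintro rfl; exact not_both hlV hr₁)
    exact right hlV hs₂ hr₁ hr₂ hlr₁ h23 h34 le_rfl
  · have hlW := hs W hW r₁ hr₁ r₂ hr₂ hr₁l hlr₂
    rcases lt_or_gt_of_ne (show s₂ ≠ l by rintro rfl; exact not_both hs₂ hlW) with hs₂l | hls₂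
    · exact left hs₁ hs₂ hr₁ hlW h12 h23 hs₂l le_rfl
    · exact not_both (hs V hV s₁ hs₁ s₂ hs₂ hs₁l hls₂) hlW

lemma INCOn.restrictPart_Ici (hP : INCOn S χ P) (hS : Ici l ⊆ S) (hl : χ l = true) :
    INCOn (Ici l) χ (restrictPart P (Ici l)) := by
  have hR := hP.1.restrictPart hS
  refine ⟨hR, hP.2.1.restrictPart _, fun V' hV' hinner k hk => ?_⟩
  obtain ⟨⟨V, hV, rfl⟩, x, hx⟩ := mem_restrictPart.1 hV'
  obtain ⟨W', hW', -, s, hsW', t, -, hst⟩ := id hinner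
  have hlV : l ∉ V := fun hlV =>
    (hst l (mem_inter.2 ⟨hlV, mem_Ici.2 le_rfl⟩)).1.not_ge (mem_Ici.1 ((hR.1 W' hW').2 hsW'))
  have hVR : V ⊆ Ici l := by
    refine ((hP.noBlockStraddles (hS (mem_Ici.2 le_rfl)) hl).subset_Iic_or_subset_Ici hV
      hlV).resolve_left fun hVL => hlV ?_
    obtain ⟨hxV, hxR⟩ := mem_inter.1 hx
    rwa [← le_antisymm (mem_Iic.1 (hVL hxV)) (mem_Ici.1 hxR)]
  rw [inter_eq_left.2 hVR] at hinner hk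
  exact hP.2.2 V hV (hinner.of_restrictPart hVR) k hk

/-- Inner blocks left of `l` consist of non-minimal points below `l`, hence are `•` by `hχ`;
inner blocks right of `l` stay inner after restriction, with `l` as left witness if needed. -/
lemma incOn_of_restrictPart_Iic_Ici (hP : IsPartitionOn S P) (hs : NoBlockStraddles l P)
    (h₁ : Noncrossing (restrictPart P (Iic l))) (h₂ : INCOn (Ici l) χ (restrictPart P (Ici l)))
    (hχ : ∀ s k, s < k → k < l → χ k = false) : INCOn S χ P := by
  refine ⟨hP, noncrossing_of_restrictPart_Iic_Ici hP hs h₁ h₂.2.1, ?_⟩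
  rintro V hV ⟨W, hW, hWV, s, hsW, t, htW, hst⟩ k hkV
  have hlV : l ∉ V := fun hlV =>
    hWV (hP.eq_of_mem hW hV (hs W hW s hsW t htW (hst l hlV).1 (hst l hlV).2) hlV)
  rcases hs.subset_Iic_or_subset_Ici hV hlV with hVL | hVR
  · exact hχ s k (hst k hkV).1 ((mem_Iic.1 (hVL hkV)).lt_of_ne (by rintro rfl; exact hlV hkV))
  have hlt : ∀ v ∈ V, l < v := fun v hv =>
    (mem_Ici.1 (hVR hv)).lt_of_ne (by rintro rfl; exact hlV hv)
  have hlt_t : l < t := (hlt k hkV).trans (hst k hkV).2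
  obtain ⟨s', hs'W, hls', hs'V⟩ : ∃ s' ∈ W, l ≤ s' ∧ ∀ v ∈ V, s' < v := by
    rcases le_or_gt l s with hls | hsl
    · exact ⟨s, hsW, hls, fun v hv => (hst v hv).1⟩
    · exact ⟨l, hs W hW s hsW t htW hsl hlt_t, le_rfl, hlt⟩
  have htR : t ∈ W ∩ Ici l := mem_inter.2 ⟨htW, mem_Ici.2 hlt_t.le⟩
  have hinner : IsInnerBlock (restrictPart P (Ici l)) V := by
    refine ⟨W ∩ Ici l, inter_mem_restrictPart hW ⟨t, htR⟩, ?_, s',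
      mem_inter.2 ⟨hs'W, mem_Ici.2 hls'⟩, t, htR, fun v hv => ⟨hs'V v hv, (hst v hv).2⟩⟩
    intro hWV'
    rw [hWV'] at htR
    exact (hst t htR).2.false
  have hVmem : V ∈ restrictPart P (Ici l) := by
    rw [← inter_eq_left.2 hVR]
    exact inter_mem_restrictPart hV ⟨k, mem_inter.2 ⟨hkV, hVR hkV⟩⟩
  exact h₂.2.2 V hVmem hinner k hkV

lemma NoBlockStraddles.refines_of_refines_restrictPart {T : Finset α} (hs : NoBlockStraddles l P)
    (hP : IsPartitionOn S P) (hQ : IsPartitionOn T Q)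
    (h₁ : Refines (restrictPart P (Iic l)) (restrictPart Q (Iic l)))
    (h₂ : Refines (restrictPart P (Ici l)) (restrictPart Q (Ici l))) : Refines P Q := by
  intro B hB
  by_cases hlB : l ∈ B
  · have hlL : l ∈ B ∩ Iic l := mem_inter.2 ⟨hlB, mem_Iic.2 le_rfl⟩
    have hlR : l ∈ B ∩ Ici l := mem_inter.2 ⟨hlB, mem_Ici.2 le_rfl⟩
    obtain ⟨C, hC, hBC⟩ := exists_superset_of_refines_restrictPart h₁ hB ⟨l, hlL⟩
    obtain ⟨D, hD, hBD⟩ := exists_superset_of_refines_restrictPart h₂ hB ⟨l, hlR⟩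
    obtain rfl : C = D := hQ.eq_of_mem hC hD (hBC hlL) (hBD hlR)
    refine ⟨C, hC, fun x hx => ?_⟩
    rcases le_total x l with hxl | hlx
    · exact hBC (mem_inter.2 ⟨hx, mem_Iic.2 hxl⟩)
    · exact hBD (mem_inter.2 ⟨hx, mem_Ici.2 hlx⟩)
  have hne := (hP.1 B hB).1
  rcases hs.subset_Iic_or_subset_Ici hB hlB with hBL | hBR
  · rw [← inter_eq_left.2 hBL] at hne ⊢
    exact exists_superset_of_refines_restrictPart h₁ hB hne
  · rw [← inter_eq_left.2 hBR] at hne ⊢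
    exact exists_superset_of_refines_restrictPart h₂ hB hne

lemma INCOn.refines_iff {T : Finset α} (hP : INCOn S χ P) (hQ : IsPartitionOn T Q) (hlS : l ∈ S)
    (hl : χ l = true) :
    Refines P Q ↔ Refines (restrictPart P (Iic l)) (restrictPart Q (Iic l)) ∧
      Refines (restrictPart P (Ici l)) (restrictPart Q (Ici l)) :=
  ⟨fun h => ⟨h.restrictPart _, h.restrictPart _⟩, fun h =>
    (hP.noBlockStraddles hlS hl).refines_of_refines_restrictPart hP.1 hQ h.1 h.2⟩

lemma INCOn.eq_of_restrictPart_eq (hP : INCOn S χ P) (hQ : INCOn S χ Q) (hlS : l ∈ S)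
    (hl : χ l = true) (e₁ : restrictPart P (Iic l) = restrictPart Q (Iic l))
    (e₂ : restrictPart P (Ici l) = restrictPart Q (Ici l)) : P = Q :=
  hP.1.eq_of_refines hQ.1
    ((hP.refines_iff hQ.1 hlS hl).2 ⟨e₁ ▸ refines_refl _, e₂ ▸ refines_refl _⟩)
    ((hQ.refines_iff hP.1 hlS hl).2 ⟨e₁ ▸ refines_refl _, e₂ ▸ refines_refl _⟩)

end CutPoint

section Glue

variable {α : Type*} [DecidableEq α] {A A' : Finset α} {l x : α} {σ σ₁ σ₂ : Finset (Finset α)}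
  {B B₁ B₂ C : Finset α}

def gluePart (σ₁ σ₂ : Finset (Finset α)) (B₁ B₂ : Finset α) : Finset (Finset α) :=
  insert (B₁ ∪ B₂) (σ₁.erase B₁ ∪ σ₂.erase B₂)

lemma gluePart_comm : gluePart σ₁ σ₂ B₁ B₂ = gluePart σ₂ σ₁ B₂ B₁ := by
  simp only [gluePart, union_comm]

lemma mem_gluePart :
    C ∈ gluePart σ₁ σ₂ B₁ B₂ ↔ C = B₁ ∪ B₂ ∨ C ∈ σ₁.erase B₁ ∨ C ∈ σ₂.erase B₂ := by
  simp only [gluePart, mem_insert, mem_union]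

lemma union_inter_eq_left_of_inter_subset (hB₁ : B₁ ⊆ A) (hB₂ : B₂ ⊆ A')
    (hAA' : ∀ x ∈ A, x ∈ A' → x = l) (hl₁ : l ∈ B₁) : (B₁ ∪ B₂) ∩ A = B₁ := by
  rw [union_inter_distrib_right, inter_eq_left.2 hB₁, union_eq_left]
  intro x hx
  obtain ⟨hx₂, hxA⟩ := mem_inter.1 hx
  rwa [hAA' x hxA (hB₂ hx₂)]

lemma IsPartitionOn.notMem_of_mem_erase (hσ : IsPartitionOn A' σ)
    (hAA' : ∀ x ∈ A, x ∈ A' → x = l) (hB : B ∈ σ) (hl : l ∈ B) (hC : C ∈ σ.erase B)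
    (hxC : x ∈ C) : x ∉ A := by
  intro hxA
  have hCσ := mem_of_mem_erase hC
  obtain rfl := hAA' x hxA ((hσ.1 C hCσ).2 hxC)
  exact ne_of_mem_erase hC (hσ.eq_of_mem hCσ hB hxC hl)

lemma eq_union_of_mem_gluePart (hσ₁ : IsPartitionOn A σ₁) (hσ₂ : IsPartitionOn A' σ₂)
    (hAA' : ∀ x ∈ A, x ∈ A' → x = l) (hB₁ : B₁ ∈ σ₁) (hB₂ : B₂ ∈ σ₂) (hl₂ : l ∈ B₂)
    (hC : C ∈ gluePart σ₁ σ₂ B₁ B₂) (hxC : x ∈ C) (hxB₁ : x ∈ B₁) : C = B₁ ∪ B₂ := by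
  rcases mem_gluePart.1 hC with rfl | hC | hC
  · rfl
  · exact absurd (hσ₁.eq_of_mem (mem_of_mem_erase hC) hB₁ hxC hxB₁) (ne_of_mem_erase hC)
  · exact absurd ((hσ₁.1 B₁ hB₁).2 hxB₁) (hσ₂.notMem_of_mem_erase hAA' hB₂ hl₂ hC hxC)

lemma exists_mem_gluePart (hσ₁ : IsPartitionOn A σ₁) (hx : x ∈ A) :
    ∃ C ∈ gluePart σ₁ σ₂ B₁ B₂, x ∈ C := by
  obtain ⟨C, ⟨hC, hxC⟩, -⟩ := hσ₁.2 x hx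
  by_cases hCB : C = B₁
  · exact ⟨B₁ ∪ B₂, mem_insert_self _ _, mem_union_left _ (hCB ▸ hxC)⟩
  · exact ⟨C, mem_gluePart.2 (Or.inr (Or.inl (mem_erase.2 ⟨hCB, hC⟩))), hxC⟩

lemma restrictPart_gluePart (hσ₁ : IsPartitionOn A σ₁) (hσ₂ : IsPartitionOn A' σ₂)
    (hAA' : ∀ x ∈ A, x ∈ A' → x = l) (hB₁ : B₁ ∈ σ₁) (hl₁ : l ∈ B₁) (hB₂ : B₂ ∈ σ₂)
    (hl₂ : l ∈ B₂) : restrictPart (gluePart σ₁ σ₂ B₁ B₂) A = σ₁ := by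
  have hunion : (B₁ ∪ B₂) ∩ A = B₁ :=
    union_inter_eq_left_of_inter_subset (hσ₁.1 B₁ hB₁).2 (hσ₂.1 B₂ hB₂).2 hAA' hl₁
  ext V
  rw [mem_restrictPart]
  constructor
  · rintro ⟨⟨C, hC, rfl⟩, x, hx⟩
    obtain ⟨hxC, hxA⟩ := mem_inter.1 hx
    rcases mem_gluePart.1 hC with rfl | hC | hC
    · rwa [hunion]
    · rw [inter_eq_left.2 (hσ₁.1 C (mem_of_mem_erase hC)).2]
      exact mem_of_mem_erase hC
    · exact absurd hxA (hσ₂.notMem_of_mem_erase hAA' hB₂ hl₂ hC hxC)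
  · intro hV
    by_cases hVB : V = B₁
    · subst hVB
      exact ⟨⟨V ∪ B₂, mem_insert_self _ _, hunion⟩, l, hl₁⟩
    · exact ⟨⟨V, mem_gluePart.2 (Or.inr (Or.inl (mem_erase.2 ⟨hVB, hV⟩))),
        inter_eq_left.2 (hσ₁.1 V hV).2⟩, (hσ₁.1 V hV).1⟩

lemma isPartitionOn_gluePart (hσ₁ : IsPartitionOn A σ₁) (hσ₂ : IsPartitionOn A' σ₂)
    (hAA' : ∀ x ∈ A, x ∈ A' → x = l) (hB₁ : B₁ ∈ σ₁) (hl₁ : l ∈ B₁) (hB₂ : B₂ ∈ σ₂)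
    (hl₂ : l ∈ B₂) : IsPartitionOn (A ∪ A') (gluePart σ₁ σ₂ B₁ B₂) := by
  have hA'A : ∀ x ∈ A', x ∈ A → x = l := fun x h' h => hAA' x h h'
  refine ⟨fun C hC => ?_, fun x hx => ?_⟩
  · rcases mem_gluePart.1 hC with rfl | hC | hC
    · exact ⟨⟨l, mem_union_left _ hl₁⟩, union_subset_union (hσ₁.1 B₁ hB₁).2 (hσ₂.1 B₂ hB₂).2⟩
    · exact ⟨(hσ₁.1 C (mem_of_mem_erase hC)).1,
        (hσ₁.1 C (mem_of_mem_erase hC)).2.trans subset_union_left⟩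
    · exact ⟨(hσ₂.1 C (mem_of_mem_erase hC)).1,
        (hσ₂.1 C (mem_of_mem_erase hC)).2.trans subset_union_right⟩
  obtain ⟨C, hC, hxC⟩ : ∃ C ∈ gluePart σ₁ σ₂ B₁ B₂, x ∈ C := by
    rcases mem_union.1 hx with hxA | hxA'
    · exact exists_mem_gluePart hσ₁ hxA
    · rw [gluePart_comm]
      exact exists_mem_gluePart hσ₂ hxA'
  refine ⟨C, ⟨hC, hxC⟩, fun D ⟨hD, hxD⟩ => ?_⟩
  by_cases hx₁ : x ∈ B₁
  · rw [eq_union_of_mem_gluePart hσ₁ hσ₂ hAA' hB₁ hB₂ hl₂ hD hxD hx₁,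
      eq_union_of_mem_gluePart hσ₁ hσ₂ hAA' hB₁ hB₂ hl₂ hC hxC hx₁]
  by_cases hx₂ : x ∈ B₂
  · rw [gluePart_comm] at hC hD
    rw [eq_union_of_mem_gluePart hσ₂ hσ₁ hA'A hB₂ hB₁ hl₁ hD hxD hx₂,
      eq_union_of_mem_gluePart hσ₂ hσ₁ hA'A hB₂ hB₁ hl₁ hC hxC hx₂]
  have hx₁₂ : x ∉ B₁ ∪ B₂ := by simp [hx₁, hx₂]
  rcases mem_gluePart.1 hD with rfl | hD | hD <;> rcases mem_gluePart.1 hC with rfl | hC | hC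
  all_goals first
    | exact absurd hxD hx₁₂
    | exact absurd hxC hx₁₂
    | exact hσ₁.eq_of_mem (mem_of_mem_erase hD) (mem_of_mem_erase hC) hxD hxC
    | exact hσ₂.eq_of_mem (mem_of_mem_erase hD) (mem_of_mem_erase hC) hxD hxC
    | exact absurd ((hσ₁.1 D (mem_of_mem_erase hD)).2 hxD)
        (hσ₂.notMem_of_mem_erase hAA' hB₂ hl₂ hC hxC)
    | exact absurd ((hσ₁.1 C (mem_of_mem_erase hC)).2 hxC)
        (hσ₂.notMem_of_mem_erase hAA' hB₂ hl₂ hD hxD)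

variable [LinearOrder α] [LocallyFiniteOrderBot α] [LocallyFiniteOrderTop α] {χ : α → Bool}

lemma noBlockStraddles_gluePart (hσ₁ : IsPartitionOn (Iic l) σ₁) (hσ₂ : IsPartitionOn (Ici l) σ₂)
    (hl₁ : l ∈ B₁) : NoBlockStraddles l (gluePart σ₁ σ₂ B₁ B₂) := by
  intro C hC x hx y hy hxl hly
  rcases mem_gluePart.1 hC with rfl | hC | hC
  · exact mem_union_left _ hl₁
  · exact absurd (mem_Iic.1 ((hσ₁.1 C (mem_of_mem_erase hC)).2 hy)) hly.not_ge
  · exact absurd (mem_Ici.1 ((hσ₂.1 C (mem_of_mem_erase hC)).2 hx)) hxl.not_ge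

lemma exists_incOn_restrictPart_eq [Fintype α] (hσ₁ : NCOn (Iic l) σ₁)
    (hσ₂ : INCOn (Ici l) χ σ₂) (hχ : ∀ s k, s < k → k < l → χ k = false) :
    ∃ π : Finset (Finset α), INCOn univ χ π ∧
      restrictPart π (Iic l) = σ₁ ∧ restrictPart π (Ici l) = σ₂ := by
  obtain ⟨B₁, ⟨hB₁, hl₁⟩, -⟩ := hσ₁.1.2 l (mem_Iic.2 le_rfl)
  obtain ⟨B₂, ⟨hB₂, hl₂⟩, -⟩ := hσ₂.1.2 l (mem_Ici.2 le_rfl)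
  have hLR : ∀ x ∈ Iic l, x ∈ Ici l → x = l := fun x h₁ h₂ =>
    le_antisymm (mem_Iic.1 h₁) (mem_Ici.1 h₂)
  have e₁ : restrictPart (gluePart σ₁ σ₂ B₁ B₂) (Iic l) = σ₁ :=
    restrictPart_gluePart hσ₁.1 hσ₂.1 hLR hB₁ hl₁ hB₂ hl₂
  have e₂ : restrictPart (gluePart σ₁ σ₂ B₁ B₂) (Ici l) = σ₂ := by
    rw [gluePart_comm]
    exact restrictPart_gluePart hσ₂.1 hσ₁.1 (fun x h₂ h₁ => hLR x h₁ h₂) hB₂ hl₂ hB₁ hl₁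
  have hπ : IsPartitionOn univ (gluePart σ₁ σ₂ B₁ B₂) := by
    have hLR_univ : Iic l ∪ Ici l = univ :=
      eq_univ_of_forall fun x => by simpa only [mem_union, mem_Iic, mem_Ici] using le_total x l
    exact hLR_univ ▸ isPartitionOn_gluePart hσ₁.1 hσ₂.1 hLR hB₁ hl₁ hB₂ hl₂
  refine ⟨_, incOn_of_restrictPart_Iic_Ici hπ (noBlockStraddles_gluePart hσ₁.1 hσ₂.1 hl₁)
    ?_ ?_ hχ, e₁, e₂⟩
  · rw [e₁]; exact hσ₁.2
  · rw [e₂]; exact hσ₂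

end Glue

theorem INC_orderIso_NC_prod_INC_general {n : ℕ} (χ : Fin n → Bool)
    (l₁ : Fin n) (hl₁ : χ l₁ = true)
    (hsecond : ∀ k : Fin n, 0 < k.val → k < l₁ → χ k = false) :
    -- the map is well defined into NC([1,l₁]) × INC(χ')
    (∀ π : Finset (Finset (Fin n)), INCOn Finset.univ χ π →
      NCOn (Finset.Iic l₁) (restrictPart π (Finset.Iic l₁)) ∧
      INCOn (Finset.Ici l₁) χ (restrictPart π (Finset.Ici l₁))) ∧
    -- injectivity
    (∀ π₁ π₂ : Finset (Finset (Fin n)), INCOn Finset.univ χ π₁ → INCOn Finset.univ χ π₂ →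
      restrictPart π₁ (Finset.Iic l₁) = restrictPart π₂ (Finset.Iic l₁) →
      restrictPart π₁ (Finset.Ici l₁) = restrictPart π₂ (Finset.Ici l₁) → π₁ = π₂) ∧
    -- surjectivity
    (∀ σ₁ σ₂ : Finset (Finset (Fin n)),
      NCOn (Finset.Iic l₁) σ₁ → INCOn (Finset.Ici l₁) χ σ₂ →
      ∃ π : Finset (Finset (Fin n)), INCOn Finset.univ χ π ∧
        restrictPart π (Finset.Iic l₁) = σ₁ ∧ restrictPart π (Finset.Ici l₁) = σ₂) ∧
    -- it and its inverse are order preserving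
    (∀ π₁ π₂ : Finset (Finset (Fin n)), INCOn Finset.univ χ π₁ → INCOn Finset.univ χ π₂ →
      (Refines π₁ π₂ ↔
        Refines (restrictPart π₁ (Finset.Iic l₁)) (restrictPart π₂ (Finset.Iic l₁)) ∧
        Refines (restrictPart π₁ (Finset.Ici l₁)) (restrictPart π₂ (Finset.Ici l₁)))) := by
  have hχ : ∀ s k : Fin n, s < k → k < l₁ → χ k = false := fun s k hsk =>
    hsecond k (lt_of_le_of_lt (Nat.zero_le s.val) hsk)
  refine ⟨fun π hπ => ⟨NCOn.restrictPart ⟨hπ.1, hπ.2.1⟩ (subset_univ _),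
      hπ.restrictPart_Ici (subset_univ _) hl₁⟩,
    fun π₁ π₂ h₁ h₂ => h₁.eq_of_restrictPart_eq h₂ (mem_univ l₁) hl₁,
    fun σ₁ σ₂ hσ₁ hσ₂ => exists_incOn_restrictPart_eq hσ₁ hσ₂ hχ,
    fun π₁ π₂ h₁ h₂ => h₁.refines_iff h₂.1 (mem_univ l₁) hl₁⟩

/-- the map π ↦ (π|_[1,l₁], π|_[l₁,n]) is an order isomorphism from
INC(χ) onto NC([1,l₁]) × INC(χ'), where χ' is the restriction of χ to [l₁,n]. -/
theorem INC_orderIso_NC_prod_INC {n : ℕ} (hn : 0 < n) (χ : Fin n → Bool)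
    (hχ1 : χ ⟨0, hn⟩ = true) (hχn : χ ⟨n - 1, Nat.sub_lt hn one_pos⟩ = true)
    (l₁ : Fin n) (hl₁pos : 0 < l₁.val) (hl₁lt : l₁.val < n - 1) (hl₁ : χ l₁ = true)
    (hsecond : ∀ k : Fin n, 0 < k.val → k < l₁ → χ k = false) :
    -- the map is well defined into NC([1,l₁]) × INC(χ')
    (∀ π : Finset (Finset (Fin n)), INCOn Finset.univ χ π →
      NCOn (Finset.Iic l₁) (restrictPart π (Finset.Iic l₁)) ∧
      INCOn (Finset.Ici l₁) χ (restrictPart π (Finset.Ici l₁))) ∧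
    -- injectivity
    (∀ π₁ π₂ : Finset (Finset (Fin n)), INCOn Finset.univ χ π₁ → INCOn Finset.univ χ π₂ →
      restrictPart π₁ (Finset.Iic l₁) = restrictPart π₂ (Finset.Iic l₁) →
      restrictPart π₁ (Finset.Ici l₁) = restrictPart π₂ (Finset.Ici l₁) → π₁ = π₂) ∧
    -- surjectivity
    (∀ σ₁ σ₂ : Finset (Finset (Fin n)),
      NCOn (Finset.Iic l₁) σ₁ → INCOn (Finset.Ici l₁) χ σ₂ →
      ∃ π : Finset (Finset (Fin n)), INCOn Finset.univ χ π ∧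
        restrictPart π (Finset.Iic l₁) = σ₁ ∧ restrictPart π (Finset.Ici l₁) = σ₂) ∧
    -- it and its inverse are order preserving
    (∀ π₁ π₂ : Finset (Finset (Fin n)), INCOn Finset.univ χ π₁ → INCOn Finset.univ χ π₂ →
      (Refines π₁ π₂ ↔
        Refines (restrictPart π₁ (Finset.Iic l₁)) (restrictPart π₂ (Finset.Iic l₁)) ∧
        Refines (restrictPart π₁ (Finset.Ici l₁)) (restrictPart π₂ (Finset.Ici l₁)))) :=
  INC_orderIso_NC_prod_INC_general χ l₁ hl₁ hsecond
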